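/- For every integer k (possibly negative) and every natural number m, the finite simple continued fraction [4,4,…,4,2k+3] consisting of m fours followed by a final entry 2k+3 equals (F_{3m+4} + k·F_{3m+3})/(F_{3m+1} + k·F_{3m}), where all divisions are taken in ℚ and every partial denominator arising in the evaluation of the continued fraction is nonzero. -/
import Mathlib


def cf : List ℤ → ℚ
  | [] => 0
  | [a] => (a : ℚ)
  | a :: b :: l => (a : ℚ) + (cf (b :: l))⁻¹

lemma cf_cons (a : ℤ) (l : List ℤ) (hl : l ≠ []) :
    cf (a :: l) = (a : ℚ) + (cf l)⁻¹ := by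
  cases l with
  | nil => exact absurd rfl hl
  | cons b t => rfl

lemma fib_key (n : ℕ) : Nat.fib (n + 6) = 4 * Nat.fib (n + 3) + Nat.fib n := by
  simp [show n+6 = (n+4)+2 by ring, show n+5 = (n+3)+2 by ring,
    show n+4 = (n+2)+2 by ring, show n+3 = (n+1)+2 by ring, Nat.fib_add_two]
  ring

theorem cf_fours_fib_int (k : ℤ) (m : ℕ)
    (hden : ∀ t : List ℤ, t <:+ (List.replicate m 4 ++ [2 * k + 3]) →
      t ≠ List.replicate m 4 ++ [2 * k + 3] → t ≠ [] → cf t ≠ 0) :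
    cf (List.replicate m 4 ++ [2 * k + 3]) =
      ((Nat.fib (3 * m + 4) : ℚ) + (k : ℚ) * (Nat.fib (3 * m + 3) : ℚ)) /
        ((Nat.fib (3 * m + 1) : ℚ) + (k : ℚ) * (Nat.fib (3 * m) : ℚ)) := by
  induction m with
  | zero =>
    simp [cf]
    norm_num [Nat.fib]
    ring
  | succ m ih =>
    set rest := List.replicate m 4 ++ [2 * k + 3] with hrestdef
    have hfull : List.replicate (m + 1) 4 ++ [2 * k + 3] = 4 :: rest := by
      simp [List.replicate_succ, hrestdef]
    have hrest_suf : rest <:+ List.replicate (m + 1) 4 ++ [2 * k + 3] := by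
      rw [hfull]; exact List.suffix_cons 4 rest
    have hlen : rest.length < (List.replicate (m + 1) 4 ++ [2 * k + 3]).length := by
      rw [hfull]; simp
    have hrest_ne_full : rest ≠ List.replicate (m + 1) 4 ++ [2 * k + 3] := by
      intro h; rw [h] at hlen; exact lt_irrefl _ hlen
    have hrest_ne : rest ≠ [] := by simp [hrestdef]
    have hcf : cf rest ≠ 0 := hden rest hrest_suf hrest_ne_full hrest_ne
    have ih' := ih (fun t ht hne hnil => by
      refine hden t (ht.trans hrest_suf) ?_ hnil
      intro h
      have := ht.length_le
      rw [h] at this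
      omega)
    rw [hfull, cf_cons 4 rest hrest_ne, ih']
    rw [ih'] at hcf
    have hb : ((Nat.fib (3 * m + 1) : ℚ) + (k : ℚ) * (Nat.fib (3 * m) : ℚ)) ≠ 0 := by
      intro h; rw [h, div_zero] at hcf; exact hcf rfl
    have ha : ((Nat.fib (3 * m + 4) : ℚ) + (k : ℚ) * (Nat.fib (3 * m + 3) : ℚ)) ≠ 0 := by
      intro h; rw [h, zero_div] at hcf; exact hcf rfl
    have h1 : 3 * (m + 1) + 4 = (3 * m + 1) + 6 := by ring
    have h2 : 3 * (m + 1) + 3 = 3 * m + 6 := by ring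
    have h3 : 3 * (m + 1) + 1 = 3 * m + 4 := by ring
    have h4 : 3 * (m + 1) = 3 * m + 3 := by ring
    rw [h1, h2, h3, h4, fib_key (3 * m + 1), fib_key (3 * m)]
    push_cast
    field_simp
    ring
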